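/- If A and B are independent discrete random variables and M is any discrete random variable jointly distributed with them, then E_{m ← M}[ SD( A|_{M=m}×B|_{M=m} vs (A,B)|_{M=m} ) ] ≤ 2·E_{b ← B}[ SD( (A,M)|_{B=b} , A|_{B=b} × M|_{B=b} ) ]. -/

import Mathlib

open scoped BigOperators Classical

noncomputable section

variable {Ω : Type*} [Fintype Ω]

/-- Probability of an event under a mass function `μ`. -/
def prEv (μ : Ω → ℝ) (E : Ω → Prop) : ℝ := ∑ ω, if E ω then μ ω else 0

/-- Distribution (pmf) of a random variable. -/
def rvDist (μ : Ω → ℝ) {α : Type*} (X : Ω → α) : α → ℝ :=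
  fun a => prEv μ (fun ω => X ω = a)

/-- Conditional distribution of `X` given the event `B = b`. -/
def condDist (μ : Ω → ℝ) {α β : Type*} (X : Ω → α) (B : Ω → β) (b : β) : α → ℝ :=
  fun a => prEv μ (fun ω => X ω = a ∧ B ω = b) / prEv μ (fun ω => B ω = b)

/-- Product of two distributions. -/
def prodDist {α β : Type*} (P : α → ℝ) (Q : β → ℝ) : α × β → ℝ := fun p => P p.1 * Q p.2

/-- Statistical (total variation) distance between two distributions on a finite set. -/
def SD {α : Type*} [Fintype α] (P Q : α → ℝ) : ℝ := (1/2) * ∑ a, |P a - Q a|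

/-- Shannon entropy (base 2) of a distribution, with the convention `0 · log(1/0) = 0`. -/
def H2 {α : Type*} [Fintype α] (P : α → ℝ) : ℝ :=
  ∑ a, if P a = 0 then 0 else P a * Real.logb 2 (1 / P a)

/-- Shannon entropy of a random variable. -/
def entRV (μ : Ω → ℝ) {α : Type*} [Fintype α] (X : Ω → α) : ℝ := H2 (rvDist μ X)

/-- Conditional mutual information `I(A;B|C)` (in bits). -/
def condMI (μ : Ω → ℝ) {α β γ : Type*} [Fintype α] [Fintype β] [Fintype γ]
    (A : Ω → α) (B : Ω → β) (C : Ω → γ) : ℝ :=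
  entRV μ (fun ω => (A ω, C ω)) + entRV μ (fun ω => (B ω, C ω))
    - entRV μ (fun ω => (A ω, B ω, C ω)) - entRV μ C

/-- The conditional probability measure given `Z = z`. -/
def condMeas (μ : Ω → ℝ) {ζ : Type*} (Z : Ω → ζ) (z : ζ) : Ω → ℝ :=
  fun ω => if Z ω = z then μ ω / prEv μ (fun ω' => Z ω' = z) else 0

/-- `μ` is a probability mass function. -/
def IsPMF (μ : Ω → ℝ) : Prop := (∀ ω, 0 ≤ μ ω) ∧ ∑ ω, μ ω = 1

end

/-!
For each `m`, the triangle inequality through `A ⊗ B|_m`, together with the fact that the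
statistical distance can only shrink under taking marginals, bounds
`SD(A|_m ⊗ B|_m, (A,B)|_m)` by `2 · SD((A,B)|_m, A ⊗ B|_m)`. Averaged over `m`, the latter is
`SD((A,B,M), A ⊗ (B,M))`, the distance of `A` from being independent of `(B,M)`. Since `A` is
independent of `B`, `A|_b = A`, so averaging `SD((A,M)|_b, A|_b ⊗ M|_b)` over `b` gives that same
distance.
-/

section StatisticalDistance

variable {α β : Type*} [Fintype β]

theorem sum_prodDist_right (Q : α → ℝ) {R : β → ℝ} (hR : ∑ b, R b = 1) (a : α) :
    ∑ b, prodDist Q R (a, b) = Q a := by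
  simp only [prodDist, ← Finset.mul_sum, hR, mul_one]

variable [Fintype α]

theorem SD_comm (P Q : α → ℝ) : SD P Q = SD Q P := by
  simp only [SD, abs_sub_comm]

theorem SD_triangle (P Q R : α → ℝ) : SD P R ≤ SD P Q + SD Q R := by
  simp only [SD, ← mul_add, ← Finset.sum_add_distrib]
  gcongr with a
  exact abs_sub_le _ _ _

theorem mul_SD {c : ℝ} (hc : 0 ≤ c) (P Q : α → ℝ) :
    c * SD P Q = SD (fun a => c * P a) (fun a => c * Q a) := by
  simp only [SD, Finset.mul_sum, ← mul_sub, abs_mul, abs_of_nonneg hc]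
  exact Finset.sum_congr rfl fun _ _ => by ring

theorem SD_comp_equiv (e : β ≃ α) (P Q : α → ℝ) : SD (P ∘ e) (Q ∘ e) = SD P Q := by
  simp only [SD, Function.comp_apply, e.sum_comp (fun a => |P a - Q a|)]

theorem SD_prodDist_right (P Q : α → ℝ) {R : β → ℝ} (hR0 : ∀ b, 0 ≤ R b)
    (hR : ∑ b, R b = 1) : SD (prodDist P R) (prodDist Q R) = SD P Q := by
  simp only [SD, prodDist, Fintype.sum_prod_type, ← sub_mul, abs_mul, abs_of_nonneg (hR0 _),
    ← Finset.mul_sum, hR, mul_one]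

theorem SD_marginal_le (P Q : α × β → ℝ) :
    SD (fun a => ∑ b, P (a, b)) (fun a => ∑ b, Q (a, b)) ≤ SD P Q := by
  simp only [SD, Fintype.sum_prod_type, ← Finset.sum_sub_distrib]
  gcongr with a
  exact Finset.abs_sum_le_sum_abs _ _

theorem SD_prodDist_le_two_mul (P : α × β → ℝ) {P₁ Q : α → ℝ} {R : β → ℝ}
    (hP₁ : ∀ a, ∑ b, P (a, b) = P₁ a) (hR0 : ∀ b, 0 ≤ R b) (hR : ∑ b, R b = 1) :
    SD (prodDist P₁ R) P ≤ 2 * SD P (prodDist Q R) := by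
  have hmarg : SD P₁ Q ≤ SD P (prodDist Q R) := by
    simpa only [hP₁, sum_prodDist_right Q hR] using SD_marginal_le P (prodDist Q R)
  calc SD (prodDist P₁ R) P
      ≤ SD (prodDist P₁ R) (prodDist Q R) + SD (prodDist Q R) P := SD_triangle _ _ _
    _ = SD P₁ Q + SD P (prodDist Q R) := by rw [SD_prodDist_right _ _ hR0 hR, SD_comm P]
    _ ≤ 2 * SD P (prodDist Q R) := by linarith

end StatisticalDistance

section Conditioning

variable {Ω α β γ : Type*} [Fintype Ω] {μ : Ω → ℝ}

theorem prEv_nonneg (hμ : ∀ ω, 0 ≤ μ ω) (E : Ω → Prop) : 0 ≤ prEv μ E :=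
  Finset.sum_nonneg fun ω _ => by split <;> simp [hμ ω]

theorem prEv_mono (hμ : ∀ ω, 0 ≤ μ ω) {E F : Ω → Prop} (h : ∀ ω, E ω → F ω) :
    prEv μ E ≤ prEv μ F :=
  Finset.sum_le_sum fun ω _ => by
    by_cases hE : E ω
    · simp [hE, h ω hE]
    · simp only [hE, if_false]; split <;> simp [hμ ω]

theorem sum_prEv_eq_and [Fintype β] (Y : Ω → β) (E : Ω → Prop) :
    ∑ y, prEv μ (fun ω => Y ω = y ∧ E ω) = prEv μ E := by
  unfold prEv
  rw [Finset.sum_comm]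
  refine Finset.sum_congr rfl fun ω _ => ?_
  by_cases hE : E ω <;> simp [hE]

theorem rvDist_nonneg (hμ : ∀ ω, 0 ≤ μ ω) (X : Ω → α) (x : α) : 0 ≤ rvDist μ X x :=
  prEv_nonneg hμ _

theorem condDist_nonneg (hμ : ∀ ω, 0 ≤ μ ω) (X : Ω → α) (Z : Ω → γ) (z : γ) (x : α) :
    0 ≤ condDist μ X Z z x :=
  div_nonneg (prEv_nonneg hμ _) (prEv_nonneg hμ _)

theorem sum_condDist [Fintype α] (X : Ω → α) (Z : Ω → γ) {z : γ} (hz : rvDist μ Z z ≠ 0) :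
    ∑ x, condDist μ X Z z x = 1 := by
  simp only [condDist, ← Finset.sum_div, sum_prEv_eq_and]
  exact div_self hz

theorem sum_condDist_pair [Fintype β] (X : Ω → α) (Y : Ω → β) (Z : Ω → γ) (z : γ) (x : α) :
    ∑ y, condDist μ (fun ω => (X ω, Y ω)) Z z (x, y) = condDist μ X Z z x := by
  simp only [condDist, ← Finset.sum_div, Prod.mk.injEq, and_assoc]
  simp only [and_left_comm (a := X _ = x), sum_prEv_eq_and]

theorem rvDist_mul_condDist (hμ : ∀ ω, 0 ≤ μ ω) (X : Ω → α) (Z : Ω → γ) (z : γ) (x : α) :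
    rvDist μ Z z * condDist μ X Z z x = rvDist μ (fun ω => (X ω, Z ω)) (x, z) := by
  simp only [rvDist, condDist, Prod.mk.injEq]
  by_cases hz : prEv μ (fun ω => Z ω = z) = 0
  · rw [hz, zero_mul, eq_comm]
    exact le_antisymm (hz ▸ prEv_mono hμ fun ω h => h.2) (prEv_nonneg hμ _)
  · exact mul_div_cancel₀ _ hz

theorem condDist_eq_rvDist_of_indep {X : Ω → α} {Y : Ω → β}
    (hind : rvDist μ (fun ω => (X ω, Y ω)) = prodDist (rvDist μ X) (rvDist μ Y)) {y : β}
    (hy : rvDist μ Y y ≠ 0) : condDist μ X Y y = rvDist μ X :=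
  funext fun x => by
    have hxy := congrFun hind (x, y)
    simp only [rvDist, prodDist, Prod.mk.injEq] at hxy hy
    rw [condDist, hxy, mul_div_cancel_right₀ _ hy, rvDist]

end Conditioning

section DistanceFromIndependence

variable {Ω α β γ : Type*} [Fintype Ω] [Fintype α] [Fintype β] {μ : Ω → ℝ}

theorem rvDist_mul_SD_prodDist_condDist_le (hμ : ∀ ω, 0 ≤ μ ω) (X : Ω → α) (Y : Ω → β)
    (Z : Ω → γ) (Q : α → ℝ) (z : γ) :
    rvDist μ Z z * SD (prodDist (condDist μ X Z z) (condDist μ Y Z z))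
        (condDist μ (fun ω => (X ω, Y ω)) Z z)
      ≤ 2 * (rvDist μ Z z *
        SD (condDist μ (fun ω => (X ω, Y ω)) Z z) (prodDist Q (condDist μ Y Z z))) := by
  by_cases hz : rvDist μ Z z = 0
  · simp [hz]
  rw [mul_left_comm]
  exact mul_le_mul_of_nonneg_left
    (SD_prodDist_le_two_mul _ (sum_condDist_pair X Y Z z) (condDist_nonneg hμ Y Z z)
      (sum_condDist Y Z hz))
    (rvDist_nonneg hμ Z z)

variable [Fintype γ]

theorem sum_rvDist_mul_SD_condDist (hμ : ∀ ω, 0 ≤ μ ω) (X : Ω → α) (Y : Ω → β) (Z : Ω → γ)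
    (Q : α → ℝ) :
    ∑ z, rvDist μ Z z *
        SD (condDist μ (fun ω => (X ω, Y ω)) Z z) (prodDist Q (condDist μ Y Z z))
      = SD (rvDist μ (fun ω => (X ω, Y ω, Z ω)))
          (prodDist Q (rvDist μ (fun ω => (Y ω, Z ω)))) := by
  have hXYZ : ∀ x y z, rvDist μ (fun ω => ((X ω, Y ω), Z ω)) ((x, y), z)
      = rvDist μ (fun ω => (X ω, Y ω, Z ω)) (x, y, z) := by
    simp [rvDist, and_assoc]
  calc ∑ z, rvDist μ Z z *
        SD (condDist μ (fun ω => (X ω, Y ω)) Z z) (prodDist Q (condDist μ Y Z z))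
      = ∑ z, 1 / 2 * ∑ x, ∑ y, |rvDist μ (fun ω => (X ω, Y ω, Z ω)) (x, y, z)
          - Q x * rvDist μ (fun ω => (Y ω, Z ω)) (y, z)| := by
        refine Finset.sum_congr rfl fun z _ => ?_
        rw [mul_SD (rvDist_nonneg hμ Z z)]
        simp only [SD, prodDist, Fintype.sum_prod_type, mul_left_comm (rvDist μ Z z),
          rvDist_mul_condDist hμ, hXYZ]
    _ = _ := by
        simp only [SD, prodDist, Fintype.sum_prod_type, ← Finset.mul_sum]
        congr 1
        rw [Finset.sum_comm]
        exact Finset.sum_congr rfl fun x _ => Finset.sum_comm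

theorem SD_rvDist_prodDist_swap (X : Ω → α) (Y : Ω → β) (Z : Ω → γ) (Q : α → ℝ) :
    SD (rvDist μ (fun ω => (X ω, Z ω, Y ω))) (prodDist Q (rvDist μ (fun ω => (Z ω, Y ω))))
      = SD (rvDist μ (fun ω => (X ω, Y ω, Z ω)))
          (prodDist Q (rvDist μ (fun ω => (Y ω, Z ω)))) := by
  rw [← SD_comp_equiv ((Equiv.refl α).prodCongr (Equiv.prodComm γ β))]
  congr 1 <;> funext ⟨x, z, y⟩ <;> simp [rvDist, prodDist, and_comm]

end DistanceFromIndependence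

/-- If `A` and `B` are independent, then
`E_{m←M}[SD(A|_m × B|_m, (A,B)|_m)] ≤ 2·E_{b←B}[SD((A,M)|_b, A|_b × M|_b)]`. -/
theorem expected_condSD_le_two_expected_of_indep {Ω α β γ : Type*}
    [Fintype Ω] [Fintype α] [Fintype β] [Fintype γ]
    (μ : Ω → ℝ) (hμ : IsPMF μ)
    (A : Ω → α) (B : Ω → β) (M : Ω → γ)
    (hind : rvDist μ (fun ω => (A ω, B ω)) = prodDist (rvDist μ A) (rvDist μ B)) :
    ∑ m : γ, rvDist μ M m *
        SD (prodDist (condDist μ A M m) (condDist μ B M m))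
           (condDist μ (fun ω => (A ω, B ω)) M m)
      ≤ 2 * (∑ b : β, rvDist μ B b *
              SD (condDist μ (fun ω => (A ω, M ω)) B b)
                 (prodDist (condDist μ A B b) (condDist μ M B b))) := by
  have hμ0 := hμ.1
  have hcondA : ∀ b, rvDist μ B b * SD (condDist μ (fun ω => (A ω, M ω)) B b)
        (prodDist (condDist μ A B b) (condDist μ M B b))
      = rvDist μ B b * SD (condDist μ (fun ω => (A ω, M ω)) B b)
        (prodDist (rvDist μ A) (condDist μ M B b)) := by
    intro b
    by_cases hb : rvDist μ B b = 0
    · rw [hb, zero_mul, zero_mul]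
    · rw [condDist_eq_rvDist_of_indep hind hb]
  calc _ ≤ ∑ m, 2 * (rvDist μ M m * SD (condDist μ (fun ω => (A ω, B ω)) M m)
          (prodDist (rvDist μ A) (condDist μ B M m))) :=
        Finset.sum_le_sum fun m _ => rvDist_mul_SD_prodDist_condDist_le hμ0 A B M _ m
    _ = 2 * SD (rvDist μ (fun ω => (A ω, B ω, M ω)))
          (prodDist (rvDist μ A) (rvDist μ (fun ω => (B ω, M ω)))) := by
        rw [← Finset.mul_sum, sum_rvDist_mul_SD_condDist hμ0]
    _ = _ := by
        rw [← SD_rvDist_prodDist_swap, ← sum_rvDist_mul_SD_condDist hμ0,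
          Finset.sum_congr rfl fun b _ => hcondA b]
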